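/- arXiv:1402.0773 — 5 statements merged into one kernel-verified Lean document; each statement's English description precedes it below -/
import Mathlib

section
/- For a linear functional 𝒰 on polynomials, a polynomial p, and m ≥ 0, the Leibniz-type formula D_ω^m(p(x)·𝒰) = Σ_{j=0}^{m} C(m,j) · (D_ω^j p)(x + (m-j)ω) · D_ω^{m-j}𝒰 holds, where the action of D_ω on a functional is defined by ⟨D_ω𝒰, p⟩ = -⟨𝒰, D_{-ω} p⟩ and (π·𝒰) is defined by ⟨π𝒰, p⟩ = ⟨𝒰, πp⟩. -/
/-!
From `D_{-ω}(q(x + ω) r) = q D_{-ω} r + (D_ω q) r` one gets the twisted product rule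
`D_ω(q𝒰) = (D_ω q)𝒰 + q(x + ω) D_ω𝒰`. Since `D_ω` commutes with shifts, the terms
`f i k = (D_ω^i p)(x + kω) D_ω^k 𝒰` satisfy `D_ω f i k = f (i+1) k + f i (k+1)`, and iterating
from `f 0 0 = p𝒰` produces the binomial coefficients by Pascal's rule.
-/

open Polynomial Finset

noncomputable def Dw (ω : ℂ) : Polynomial ℂ →ₗ[ℂ] Polynomial ℂ where
  toFun p := C ω⁻¹ * (p.comp (X + C ω) - p)
  map_add' p r := by
    ext n
    simp [add_comp, coeff_C_mul, coeff_sub, coeff_add]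
    ring
  map_smul' c p := by
    ext n
    simp [smul_comp, coeff_C_mul, coeff_smul, coeff_sub, smul_eq_mul]
    ring

/-- The product π·𝒰 of a polynomial and a linear functional: ⟨π𝒰, p⟩ = ⟨𝒰, πp⟩. -/
noncomputable def mulF (π : Polynomial ℂ) (U : Polynomial ℂ →ₗ[ℂ] ℂ) :
    Polynomial ℂ →ₗ[ℂ] ℂ :=
  U ∘ₗ (LinearMap.mulLeft ℂ π)

/-- The difference derivative of a functional: ⟨D_ω𝒰, p⟩ = -⟨𝒰, D_{-ω} p⟩. -/
noncomputable def DwF (ω : ℂ) (U : Polynomial ℂ →ₗ[ℂ] ℂ) : Polynomial ℂ →ₗ[ℂ] ℂ :=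
  -(U ∘ₗ Dw (-ω))

theorem AddMonoidHom.iterate_eq_sum_choose_nsmul {M : Type*} [AddCommMonoid M] (D : M →+ M)
    (f : ℕ → ℕ → M) (hf : ∀ i k, D (f i k) = f (i + 1) k + f i (k + 1)) (m : ℕ) :
    D^[m] (f 0 0) = ∑ j ∈ Finset.range (m + 1), m.choose j • f j (m - j) := by
  induction m with
  | zero => simp
  | succ m ih =>
    have hshift : ∀ j ∈ Finset.range (m + 1), m.choose j • f j (m - j + 1) =
        m.choose j • f j (m + 1 - j) := fun j hj => by
      rw [Nat.sub_add_comm (Nat.lt_succ_iff.mp (Finset.mem_range.mp hj))]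
    simp only [Function.iterate_succ_apply', ih, map_sum, map_nsmul, hf, smul_add,
      sum_add_distrib, sum_congr rfl hshift]
    rw [sum_choose_succ_nsmul, add_comm]

section Difference

variable (ω : ℂ)

lemma Dw_apply (q : Polynomial ℂ) : Dw ω q = C ω⁻¹ * (q.comp (X + C ω) - q) := rfl

lemma comp_X_add_C_comp_X_add_C (q : Polynomial ℂ) (a b : ℂ) :
    (q.comp (X + C a)).comp (X + C b) = q.comp (X + C (a + b)) := by
  simp only [← taylor_apply, taylor_taylor, add_comm]

lemma Dw_comp_X_add_C (a : ℂ) (q : Polynomial ℂ) :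
    Dw ω (q.comp (X + C a)) = (Dw ω q).comp (X + C a) := by
  simp only [Dw_apply, mul_comp, sub_comp, C_comp, comp_X_add_C_comp_X_add_C, add_comm]

lemma Dw_neg_comp_X_add_C (q : Polynomial ℂ) : Dw (-ω) (q.comp (X + C ω)) = Dw ω q := by
  rw [Dw_apply, Dw_apply, comp_X_add_C_comp_X_add_C, add_neg_cancel, map_zero, add_zero, comp_X,
    inv_neg, map_neg]
  ring

lemma Dw_mul (f g : Polynomial ℂ) :
    Dw ω (f * g) = f.comp (X + C ω) * Dw ω g + Dw ω f * g := by
  simp only [Dw_apply, mul_comp]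
  ring

lemma DwF_add (V W : Polynomial ℂ →ₗ[ℂ] ℂ) : DwF ω (V + W) = DwF ω V + DwF ω W := by
  simp only [DwF, LinearMap.add_comp, neg_add]

lemma DwF_mulF (q : Polynomial ℂ) (V : Polynomial ℂ →ₗ[ℂ] ℂ) :
    DwF ω (mulF q V) = mulF (Dw ω q) V + mulF (q.comp (X + C ω)) (DwF ω V) := by
  refine LinearMap.ext fun r => ?_
  have hmul : q * Dw (-ω) r = Dw (-ω) (q.comp (X + C ω) * r) - Dw ω q * r := by
    rw [Dw_mul, Dw_neg_comp_X_add_C, comp_X_add_C_comp_X_add_C, add_neg_cancel, map_zero,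
      add_zero, comp_X, add_sub_cancel_right]
  simp only [DwF, mulF, LinearMap.neg_apply, LinearMap.comp_apply, LinearMap.mulLeft_apply,
    LinearMap.add_apply, hmul, map_sub]
  ring

end Difference

theorem stmt4_general (ω : ℂ) (U : Polynomial ℂ →ₗ[ℂ] ℂ) (p : Polynomial ℂ) (m : ℕ) :
    (DwF ω)^[m] (mulF p U) =
      ∑ j ∈ Finset.range (m + 1), (m.choose j : ℂ) •
        mulF (((Dw ω ^ j) p).comp (X + C (((m - j : ℕ) : ℂ) * ω))) ((DwF ω)^[m - j] U) := by
  set f : ℕ → ℕ → (Polynomial ℂ →ₗ[ℂ] ℂ) := fun i k =>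
    mulF (((Dw ω ^ i) p).comp (X + C ((k : ℂ) * ω))) ((DwF ω)^[k] U)
  have hf : ∀ i k, DwF ω (f i k) = f (i + 1) k + f i (k + 1) := fun i k => by
    simp only [f, DwF_mulF, pow_succ', Module.End.mul_apply, Dw_comp_X_add_C,
      comp_X_add_C_comp_X_add_C, Function.iterate_succ_apply', Nat.cast_succ, add_one_mul]
  have hleibniz := (AddMonoidHom.mk' (DwF ω) (DwF_add ω)).iterate_eq_sum_choose_nsmul f hf m
  simp only [← Nat.cast_smul_eq_nsmul ℂ] at hleibniz
  simpa [f] using hleibniz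

/-- Leibniz formula
D_ω^m(p𝒰) = Σ_{j=0}^m C(m,j) (D_ω^j p)(x+(m-j)ω) D_ω^{m-j}𝒰. -/
theorem stmt4 (ω : ℂ) (hω : ω ≠ 0) (U : Polynomial ℂ →ₗ[ℂ] ℂ) (p : Polynomial ℂ) (m : ℕ) :
    (DwF ω)^[m] (mulF p U) =
      ∑ j ∈ Finset.range (m + 1), (m.choose j : ℂ) •
        mulF (((Dw ω ^ j) p).comp (X + C (((m - j : ℕ) : ℂ) * ω))) ((DwF ω)^[m - j] U) :=
  stmt4_general ω U p m
end

section
/- For a linear functional 𝒰 on polynomials, a polynomial p, and m ≥ 0, the q-Leibniz formula D_q^m(p(x)·𝒰) = Σ_{j=0}^{m} [m choose j]_q · q^j · (D_q^j p)(q^{m-j} x) · D_q^{m-j}𝒰 holds, where [m choose j]_q is the q-binomial coefficient. -/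
open Polynomial Finset

noncomputable def Dq (q : ℂ) : Polynomial ℂ →ₗ[ℂ] Polynomial ℂ where
  toFun p := C (q-1)⁻¹ * (p.comp (C q * X) - p).divX
  map_add' p r := by
    ext n
    simp [add_comp, coeff_divX, coeff_C_mul, coeff_sub, coeff_add]
    ring
  map_smul' c p := by
    ext n
    simp [smul_comp, coeff_divX, coeff_C_mul, coeff_smul, coeff_sub, smul_eq_mul]
    ring

/-- The q-derivative of a functional: ⟨D_q𝒰, p⟩ = -⟨𝒰, D_{q⁻¹} p⟩. -/
noncomputable def DqF (q : ℂ) (U : Polynomial ℂ →ₗ[ℂ] ℂ) : Polynomial ℂ →ₗ[ℂ] ℂ :=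
  -(U ∘ₗ Dq q⁻¹)

/-- The q-Pochhammer symbol (a;q)_n = ∏_{k=0}^{n-1} (1 - a qᵏ). -/
noncomputable def qPoch (a q : ℂ) (n : ℕ) : ℂ := ∏ k ∈ Finset.range n, (1 - a * q ^ k)

/-- The q-binomial coefficient [m choose j]_q = (q;q)_m / ((q;q)_j (q;q)_{m-j}). -/
noncomputable def qBinom (q : ℂ) (m j : ℕ) : ℂ :=
  qPoch q q m / (qPoch q q j * qPoch q q (m - j))

/-! The dual q-derivative obeys the product rule `D_q(π𝒰) = π(qx) D_q𝒰 + q (D_q π) 𝒰`. On the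
terms `g j k = qʲ (D_qʲ p)(qᵏx) D_qᵏ𝒰` it reads `D_q g j k = g j (k+1) + qᵏ g (j+1) k`, and any linear
operator with this property expands its `m`-th power like `(x + y)ᵐ` with `y x = q x y`: the
coefficients are the Gaussian binomials given by the q-Pascal rule. These equal
`(q;q)ₘ / ((q;q)ⱼ (q;q)ₘ₋ⱼ)` unless a Pochhammer factor `1 - qᵏ⁺¹` vanishes (where the quotient is a
junk `0 / 0`); but then `D_q^(k+1)` and `D_{q⁻¹}^(k+1)` are zero, so the term is zero anyway. -/

lemma coeff_Dq (q : ℂ) (r : ℂ[X]) (n : ℕ) :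
    (Dq q r).coeff n = (q - 1)⁻¹ * (q ^ (n + 1) - 1) * r.coeff (n + 1) := by
  simp only [Dq, LinearMap.coe_mk, AddHom.coe_mk, coeff_C_mul, coeff_divX, coeff_sub,
    comp_C_mul_X_coeff]
  ring

lemma coeff_Dq_pow (q : ℂ) (d : ℕ) (r : ℂ[X]) (n : ℕ) :
    ((Dq q ^ d) r).coeff n =
      (∏ i ∈ range d, (q - 1)⁻¹ * (q ^ (n + i + 1) - 1)) * r.coeff (n + d) := by
  induction d generalizing n with
  | zero => simp [Module.End.one_eq_id]
  | succ d ih =>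
    rw [pow_succ', Module.End.mul_apply, coeff_Dq, ih, prod_range_succ']
    simp only [add_assoc, add_comm 1, add_zero]
    ring_nf

lemma Dq_comp_C_mul_X (q a : ℂ) (r : ℂ[X]) :
    Dq q (r.comp (C a * X)) = a • (Dq q r).comp (C a * X) := by
  ext n
  simp only [coeff_Dq, comp_C_mul_X_coeff, coeff_smul, smul_eq_mul]
  ring

lemma Dq_pow_eq_zero_of_pow_eq_one {q : ℂ} {d : ℕ} (hd : 0 < d) (h : q ^ d = 1) :
    Dq q ^ d = 0 := by
  refine LinearMap.ext fun r => Polynomial.ext fun n => ?_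
  rw [coeff_Dq_pow, LinearMap.zero_apply, coeff_zero]
  have hi : d - 1 - n % d ∈ range d := mem_range.2 (by omega)
  rw [prod_eq_zero hi, zero_mul]
  have : n + (d - 1 - n % d) + 1 = d * (n / d + 1) := by
    rw [Nat.mul_succ]
    have := Nat.mod_add_div n d
    have := Nat.mod_lt n hd
    omega
  rw [this, pow_mul, h, one_pow, sub_self, mul_zero]

lemma comp_C_mul_X_comp_C_mul_X (r : ℂ[X]) (a b : ℂ) :
    (r.comp (C a * X)).comp (C b * X) = r.comp (C (a * b) * X) := by
  ext n
  simp only [comp_C_mul_X_coeff, mul_pow]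
  ring

lemma X_mul_Dq (q : ℂ) (r : ℂ[X]) : X * Dq q r = C (q - 1)⁻¹ * (r.comp (C q * X) - r) := by
  ext (_ | n)
  · simp
  · simp only [coeff_X_mul, coeff_Dq, coeff_C_mul, coeff_sub, comp_C_mul_X_coeff]
    ring

lemma inv_sub_one_inv {q : ℂ} (hq : q ≠ 0) : (q⁻¹ - 1)⁻¹ = -q * (q - 1)⁻¹ := by
  rw [show q⁻¹ - 1 = -(q - 1) * q⁻¹ by field_simp; ring, mul_inv, inv_neg, inv_inv]
  ring

lemma mul_Dq_inv {q : ℂ} (hq : q ≠ 0) (π p : ℂ[X]) :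
    π * Dq q⁻¹ p = Dq q⁻¹ (π.comp (C q * X) * p) - q • (Dq q π * p) := by
  refine mul_left_cancel₀ (X_ne_zero (R := ℂ)) ?_
  rw [mul_sub, mul_left_comm, X_mul_Dq, X_mul_Dq, mul_smul_comm, ← mul_assoc X, X_mul_Dq,
    mul_comp, comp_C_mul_X_comp_C_mul_X, mul_inv_cancel₀ hq, inv_sub_one_inv hq, smul_eq_C_mul]
  simp only [map_mul, map_neg, map_one, one_mul, comp_X]
  ring

@[simp]
lemma mulF_apply (π : ℂ[X]) (U : ℂ[X] →ₗ[ℂ] ℂ) (p : ℂ[X]) : mulF π U p = U (π * p) := rfl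

@[simp]
lemma DqF_apply (q : ℂ) (U : ℂ[X] →ₗ[ℂ] ℂ) (p : ℂ[X]) : DqF q U p = -U (Dq q⁻¹ p) := rfl

lemma DqF_smul (q c : ℂ) (U : ℂ[X] →ₗ[ℂ] ℂ) : DqF q (c • U) = c • DqF q U :=
  map_smul (-(Dq q⁻¹).dualMap) c U

lemma mulF_smul (c : ℂ) (π : ℂ[X]) (U : ℂ[X] →ₗ[ℂ] ℂ) : mulF (c • π) U = c • mulF π U := by
  refine LinearMap.ext fun p => ?_
  simp

@[simp]
lemma zero_mulF (U : ℂ[X] →ₗ[ℂ] ℂ) : mulF 0 U = 0 := by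
  refine LinearMap.ext fun p => ?_
  simp

@[simp]
lemma mulF_zero (π : ℂ[X]) : mulF π 0 = 0 := rfl

lemma DqF_mulF {q : ℂ} (hq : q ≠ 0) (π : ℂ[X]) (U : ℂ[X] →ₗ[ℂ] ℂ) :
    DqF q (mulF π U) = mulF (π.comp (C q * X)) (DqF q U) + q • mulF (Dq q π) U := by
  refine LinearMap.ext fun p => ?_
  simp only [LinearMap.add_apply, LinearMap.smul_apply, DqF_apply, mulF_apply, mul_Dq_inv hq,
    map_sub, map_smul, smul_eq_mul]
  ring

lemma DqF_mulF_comp_iterate {q : ℂ} (hq : q ≠ 0) (π : ℂ[X]) (U : ℂ[X] →ₗ[ℂ] ℂ) (k : ℕ) :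
    DqF q (mulF (π.comp (C (q ^ k) * X)) ((DqF q)^[k] U)) =
      mulF (π.comp (C (q ^ (k + 1)) * X)) ((DqF q)^[k + 1] U) +
        q ^ (k + 1) • mulF ((Dq q π).comp (C (q ^ k) * X)) ((DqF q)^[k] U) := by
  rw [DqF_mulF hq, comp_C_mul_X_comp_C_mul_X, Dq_comp_C_mul_X, mulF_smul, smul_smul,
    Function.iterate_succ_apply', pow_succ, mul_comm q]

lemma iterate_DqF_apply (q : ℂ) (k : ℕ) (U : ℂ[X] →ₗ[ℂ] ℂ) :
    (DqF q)^[k] U = (-1 : ℂ) ^ k • U ∘ₗ Dq q⁻¹ ^ k := by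
  induction k with
  | zero => simp [Module.End.one_eq_id]
  | succ k ih =>
    ext p
    simp [Function.iterate_succ_apply', ih, pow_succ]

section GaussBinom

variable {R : Type*} [CommSemiring R]

def gaussBinom (q : R) : ℕ → ℕ → R
  | _, 0 => 1
  | 0, _ + 1 => 0
  | m + 1, j + 1 => gaussBinom q m (j + 1) + q ^ (m - j) * gaussBinom q m j

@[simp]
lemma gaussBinom_zero_right (q : R) (m : ℕ) : gaussBinom q m 0 = 1 := by
  cases m <;> rfl

lemma gaussBinom_succ_succ (q : R) (m j : ℕ) :
    gaussBinom q (m + 1) (j + 1) = gaussBinom q m (j + 1) + q ^ (m - j) * gaussBinom q m j := rfl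

lemma gaussBinom_eq_zero_of_lt (q : R) {m j : ℕ} (h : m < j) : gaussBinom q m j = 0 := by
  induction m generalizing j with
  | zero => obtain _ | j := j <;> first | omega | rfl
  | succ m ih =>
    obtain _ | j := j
    · omega
    · rw [gaussBinom_succ_succ, ih (by omega), ih (by omega), mul_zero, add_zero]

@[simp]
lemma gaussBinom_self (q : R) (m : ℕ) : gaussBinom q m m = 1 := by
  induction m with
  | zero => rfl
  | succ m ih => simp [gaussBinom_succ_succ, gaussBinom_eq_zero_of_lt q m.lt_succ_self, ih]

theorem iterate_eq_sum_gaussBinom_smul {V : Type*} [AddCommMonoid V] [Module R V] (q : R)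
    (T : V →ₗ[R] V) (g : ℕ → ℕ → V) (hg : ∀ j k, T (g j k) = g j (k + 1) + q ^ k • g (j + 1) k)
    (m : ℕ) : T^[m] (g 0 0) = ∑ j ∈ range (m + 1), gaussBinom q m j • g j (m - j) := by
  induction m with
  | zero => simp
  | succ m ih =>
    have hshift : ∑ j ∈ range (m + 1), gaussBinom q m j • g j (m - j + 1) =
        ∑ j ∈ range (m + 2), gaussBinom q m j • g j (m + 1 - j) := by
      rw [sum_range_succ _ (m + 1), gaussBinom_eq_zero_of_lt q (lt_add_one m), zero_smul, add_zero]
      exact sum_congr rfl fun j hj => by rw [Nat.sub_add_comm (Nat.lt_succ_iff.1 (mem_range.1 hj))]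
    simp only [Function.iterate_succ_apply', ih, map_sum, map_smul, hg, smul_add, smul_smul,
      sum_add_distrib, hshift]
    rw [sum_range_succ', sum_range_succ' _ (m + 1)]
    simp only [gaussBinom_succ_succ, add_smul, sum_add_distrib, Nat.add_sub_add_right,
      gaussBinom_zero_right, mul_comm (q ^ _)]
    abel

end GaussBinom

lemma qPoch_succ (a q : ℂ) (n : ℕ) : qPoch a q (n + 1) = qPoch a q n * (1 - a * q ^ n) :=
  prod_range_succ _ n

lemma qPoch_eq_gaussBinom_mul (q : ℂ) {m j : ℕ} (h : j ≤ m) :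
    qPoch q q m = gaussBinom q m j * (qPoch q q j * qPoch q q (m - j)) := by
  induction m generalizing j with
  | zero =>
    obtain rfl : j = 0 := by omega
    simp [qPoch]
  | succ m ih =>
    obtain _ | i := j
    · simp [qPoch]
    obtain rfl | hi := (Nat.le_of_succ_le_succ h).eq_or_lt
    · simp [qPoch]
    obtain ⟨k, rfl⟩ := Nat.exists_eq_add_of_lt hi
    have e₁ : i + k + 1 - (i + 1) = k := by omega
    have e₂ : i + k + 1 - i = k + 1 := by omega
    have h₁ := ih hi
    have h₂ := ih hi.le
    rw [e₁, qPoch_succ q q i] at h₁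
    rw [e₂, qPoch_succ q q k] at h₂
    rw [gaussBinom_succ_succ, Nat.add_sub_add_right, e₂, qPoch_succ, qPoch_succ q q i,
      qPoch_succ q q k]
    linear_combination (1 - q ^ (k + 1)) * h₁ + q ^ (k + 1) * (1 - q * q ^ i) * h₂

lemma qBinom_eq_gaussBinom {q : ℂ} {m j : ℕ} (h : j ≤ m) (hj : qPoch q q j ≠ 0)
    (hmj : qPoch q q (m - j) ≠ 0) : qBinom q m j = gaussBinom q m j := by
  rw [qBinom, qPoch_eq_gaussBinom_mul q h, mul_div_cancel_right₀ _ (mul_ne_zero hj hmj)]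

lemma exists_pow_eq_one_of_qPoch_eq_zero {q : ℂ} {n : ℕ} (h : qPoch q q n = 0) :
    ∃ k < n, q ^ (k + 1) = 1 := by
  obtain ⟨k, hk, hk0⟩ := prod_eq_zero_iff.1 h
  exact ⟨k, mem_range.1 hk, by rw [pow_succ']; linear_combination -hk0⟩

lemma Dq_pow_eq_zero_of_qPoch_eq_zero {q : ℂ} {n : ℕ} (h : qPoch q q n = 0) : Dq q ^ n = 0 := by
  obtain ⟨k, hk, hq⟩ := exists_pow_eq_one_of_qPoch_eq_zero h
  rw [← Nat.sub_add_cancel hk, pow_add, Dq_pow_eq_zero_of_pow_eq_one k.succ_pos hq, mul_zero]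

lemma iterate_DqF_eq_zero_of_qPoch_eq_zero {q : ℂ} {n : ℕ} (h : qPoch q q n = 0)
    (U : ℂ[X] →ₗ[ℂ] ℂ) : (DqF q)^[n] U = 0 := by
  obtain ⟨k, hk, hq⟩ := exists_pow_eq_one_of_qPoch_eq_zero h
  have hnil : Dq q⁻¹ ^ n = 0 := by
    rw [← Nat.sub_add_cancel hk, pow_add,
      Dq_pow_eq_zero_of_pow_eq_one k.succ_pos (by rw [inv_pow, hq, inv_one]), mul_zero]
  rw [iterate_DqF_apply, hnil, LinearMap.comp_zero, smul_zero]

theorem stmt5_general (q : ℂ) (hq0 : q ≠ 0)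
    (U : Polynomial ℂ →ₗ[ℂ] ℂ) (p : Polynomial ℂ) (m : ℕ) :
    (DqF q)^[m] (mulF p U) =
      ∑ j ∈ Finset.range (m + 1), (qBinom q m j * q ^ j) •
        mulF (((Dq q ^ j) p).comp (C (q ^ (m - j)) * X)) ((DqF q)^[m - j] U) := by
  let g : ℕ → ℕ → (ℂ[X] →ₗ[ℂ] ℂ) := fun j k =>
    q ^ j • mulF (((Dq q ^ j) p).comp (C (q ^ k) * X)) ((DqF q)^[k] U)
  have hg (j k : ℕ) : DqF q (g j k) = g j (k + 1) + q ^ k • g (j + 1) k := by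
    simp only [g, DqF_smul, DqF_mulF_comp_iterate hq0, smul_add, smul_smul, pow_succ' (Dq q),
      Module.End.mul_apply]
    congr 2
    ring
  -- `DqF q` is the coercion of the linear map `-(Dq q⁻¹).dualMap`.
  have hleibniz := iterate_eq_sum_gaussBinom_smul q (-(Dq q⁻¹).dualMap) g hg m
  have hg₀ : g 0 0 = mulF p U := by simp [g]
  rw [hg₀] at hleibniz
  refine hleibniz.trans (sum_congr rfl fun j hj => ?_)
  have hjm : j ≤ m := Nat.lt_succ_iff.1 (mem_range.1 hj)
  rw [mul_smul]
  by_cases hPj : qPoch q q j = 0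
  · simp [g, Dq_pow_eq_zero_of_qPoch_eq_zero hPj]
  by_cases hPmj : qPoch q q (m - j) = 0
  · simp [g, iterate_DqF_eq_zero_of_qPoch_eq_zero hPmj]
  rw [qBinom_eq_gaussBinom hjm hPj hPmj]

/-- q-Leibniz formula
D_q^m(p𝒰) = Σ_{j=0}^m [m choose j]_q qʲ (D_q^j p)(q^{m-j}x) D_q^{m-j}𝒰. -/
theorem stmt5 (q : ℂ) (hq0 : q ≠ 0) (hq1 : q ≠ 1) (hqm1 : q ≠ -1)
    (U : Polynomial ℂ →ₗ[ℂ] ℂ) (p : Polynomial ℂ) (m : ℕ) :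
    (DqF q)^[m] (mulF p U) =
      ∑ j ∈ Finset.range (m + 1), (qBinom q m j * q ^ j) •
        mulF (((Dq q ^ j) p).comp (C (q ^ (m - j)) * X)) ((DqF q)^[m - j] U) :=
  stmt5_general q hq0 U p m
end

section
/- Let 𝒰 be a linear functional on polynomials, σ and τ polynomials, and q ∈ ℂ \ {0,±1}. Then D_q(σ(x)𝒰) = τ(x)𝒰 holds if and only if D_{q^{-1}}(σ̃(x)𝒰) = τ(x)𝒰 holds, where σ̃(x) = q·σ(x) + (q-1)·x·τ(x). -/
open Polynomial Finset

lemma divX_neg' (p : Polynomial ℂ) : (-p).divX = -p.divX := by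
  ext n; simp [coeff_divX]

lemma coeff0_sub (q : ℂ) (p : Polynomial ℂ) :
    (p.comp (C q * X) - p).coeff 0 = 0 := by
  simp [coeff_zero_eq_eval_zero]

lemma key1 (q : ℂ) (hq1 : q ≠ 1) (p : Polynomial ℂ) :
    p.comp (C q * X) = p + C (q-1) * X * Dq q p := by
  have hne : q - 1 ≠ 0 := sub_ne_zero.mpr hq1
  simp only [Dq, LinearMap.coe_mk, AddHom.coe_mk]
  have h1 : C (q-1) * X * (C (q-1)⁻¹ * (p.comp (C q * X) - p).divX)
      = X * (p.comp (C q * X) - p).divX := by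
    rw [mul_comm (C (q-1)) X, mul_assoc, ← mul_assoc (C (q-1)), ← C_mul,
      mul_inv_cancel₀ hne, C_1, one_mul]
  rw [h1]
  have := X_mul_divX_add (p.comp (C q * X) - p)
  rw [coeff0_sub, C_0, add_zero] at this
  rw [this]; ring

lemma key2 (q : ℂ) (hq0 : q ≠ 0) (hq1 : q ≠ 1) (p : Polynomial ℂ) :
    Dq q⁻¹ (p.comp (C q * X)) = C q * Dq q p := by
  have hne : q - 1 ≠ 0 := sub_ne_zero.mpr hq1
  simp only [Dq, LinearMap.coe_mk, AddHom.coe_mk]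
  have hcomp : (p.comp (C q * X)).comp (C q⁻¹ * X) = p := by
    rw [comp_assoc]
    simp [mul_comp, C_comp, X_comp, ← mul_assoc, ← C_mul, mul_inv_cancel₀ hq0]
  rw [hcomp]
  have : p - p.comp (C q * X) = -(p.comp (C q * X) - p) := by ring
  rw [this, divX_neg']
  have hs : C (q⁻¹-1)⁻¹ * (-1 : Polynomial ℂ) = C q * C (q-1)⁻¹ := by
    rw [← C_1, ← C_neg, ← C_mul, ← C_mul]
    congr 1
    have h1q : (1:ℂ) - q ≠ 0 := fun h => hq1 (by linear_combination -h)
    field_simp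
    ring
  calc C (q⁻¹-1)⁻¹ * -(p.comp (C q * X) - p).divX
      = (C (q⁻¹-1)⁻¹ * (-1)) * (p.comp (C q * X) - p).divX := by ring
    _ = C q * (C (q-1)⁻¹ * (p.comp (C q * X) - p).divX) := by rw [hs]; ring

/-- D_q(σ𝒰) = τ𝒰 if and only if D_{q⁻¹}(σ̃𝒰) = τ𝒰,
where σ̃ = qσ + (q-1)xτ. -/
theorem stmt7 (q : ℂ) (hq0 : q ≠ 0) (hq1 : q ≠ 1) (hqm1 : q ≠ -1)
    (U : Polynomial ℂ →ₗ[ℂ] ℂ) (σ τ : Polynomial ℂ) :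
    DqF q (mulF σ U) = mulF τ U ↔
      DqF q⁻¹ (mulF (C q * σ + C (q - 1) * X * τ) U) = mulF τ U := by
  constructor
  · intro h
    refine LinearMap.ext fun p => ?_
    have h' := LinearMap.congr_fun h (p.comp (C q * X))
    simp only [DqF, mulF, LinearMap.neg_apply, LinearMap.comp_apply,
      LinearMap.mulLeft_apply] at h' ⊢
    rw [key2 q hq0 hq1 p] at h'
    rw [key1 q hq1 p] at h'
    rw [inv_inv]
    have e1 : σ * (C q * Dq q p) = q • (σ * Dq q p) := by
      rw [smul_eq_C_mul]; ring
    have e2 : τ * (p + C (q-1) * X * Dq q p) = τ * p + (q-1) • (X * τ * Dq q p) := by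
      simp only [smul_eq_C_mul, C_sub, C_1]; ring
    have e3 : (C q * σ + C (q-1) * X * τ) * Dq q p
        = q • (σ * Dq q p) + (q-1) • (X * τ * Dq q p) := by
      simp only [smul_eq_C_mul, C_sub, C_1]; ring
    rw [e1, e2] at h'
    rw [e3]
    simp only [map_add, map_smul, smul_eq_mul] at h' ⊢
    linear_combination h'
  · intro h
    refine LinearMap.ext fun p => ?_
    have h' := LinearMap.congr_fun h (p.comp (C q⁻¹ * X))
    simp only [DqF, mulF, LinearMap.neg_apply, LinearMap.comp_apply,
      LinearMap.mulLeft_apply] at h' ⊢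
    have hq0' : q⁻¹ ≠ 0 := inv_ne_zero hq0
    have hq1' : q⁻¹ ≠ 1 := fun hh => hq1 (by rw [← inv_inv q, hh, inv_one])
    rw [key2 q⁻¹ hq0' hq1' p, key1 q⁻¹ hq1' p] at h'
    have hqq : (C q : Polynomial ℂ) * C q⁻¹ = 1 := by
      rw [← C_mul, mul_inv_cancel₀ hq0, C_1]
    have e1 : (C q * σ + C (q-1) * X * τ) * (C q⁻¹ * Dq q⁻¹ p)
        = σ * Dq q⁻¹ p + (1 - q⁻¹) • (X * τ * Dq q⁻¹ p) := by
      simp only [smul_eq_C_mul, C_sub, C_1]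
      linear_combination (σ * Dq q⁻¹ p + X * τ * Dq q⁻¹ p) * hqq
    have e2 : τ * (p + C (q⁻¹-1) * X * Dq q⁻¹ p)
        = τ * p + (q⁻¹-1) • (X * τ * Dq q⁻¹ p) := by
      simp only [smul_eq_C_mul, C_sub, C_1]; ring
    rw [e1, e2] at h'
    simp only [map_add, map_smul, smul_eq_mul] at h' ⊢
    linear_combination h'
end

section
/- Suppose 𝒰 and 𝒱 are linear functionals on polynomials related by p(x)𝒰 = r(x)𝒱 for nonzero polynomials p, r, and suppose 𝒰 is D_ω-semiclassical, i.e., D_ω(σ(x)𝒰) = τ(x)𝒰 with deg τ ≥ 1. Then 𝒱 satisfies D_ω(p(x-ω)σ(x)r(x)𝒱) = (p(x+ω)τ(x) + D_ω[p(x)+p(x-ω)]·σ(x))·r(x)𝒱; in particular 𝒱 is also D_ω-semiclassical (with deg of the coefficient polynomials increased by at most deg p + deg r). -/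
open Polynomial Finset

/-- if p𝒰 = r𝒱 and D_ω(σ𝒰) = τ𝒰 (𝒰 being D_ω-semiclassical, deg τ ≥ 1),
then D_ω(p(x-ω)σ(x)r(x)𝒱) = (p(x+ω)τ(x) + D_ω[p(x)+p(x-ω)]σ(x))·r(x)𝒱. -/
theorem stmt8 (ω : ℂ) (hω : ω ≠ 0) (U V : Polynomial ℂ →ₗ[ℂ] ℂ)
    (p r σ τ : Polynomial ℂ) (hp : p ≠ 0) (hr : r ≠ 0) (hτ : 1 ≤ τ.natDegree)
    (hUV : mulF p U = mulF r V) (hsemi : DwF ω (mulF σ U) = mulF τ U) :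
    DwF ω (mulF (p.comp (X - C ω) * σ * r) V) =
      mulF ((p.comp (X + C ω) * τ + Dw ω (p + p.comp (X - C ω)) * σ) * r) V := by
  refine LinearMap.ext fun f => ?_
  have key : ∀ h, U (p * h) = V (r * h) := by
    intro h
    simpa [mulF] using LinearMap.congr_fun hUV h
  have hs : ∀ h, -(U (σ * Dw (-ω) h)) = U (τ * h) := by
    intro h
    simpa [mulF, DwF] using LinearMap.congr_fun hsemi h
  simp only [DwF, mulF, LinearMap.neg_apply, LinearMap.comp_apply, LinearMap.mulLeft_apply]
  rw [show (p.comp (X - C ω) * σ * r) * (Dw (-ω)) f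
        = r * (p.comp (X - C ω) * σ * (Dw (-ω)) f) by ring,
      show ((p.comp (X + C ω) * τ + (Dw ω) (p + p.comp (X - C ω)) * σ) * r) * f
        = r * ((p.comp (X + C ω) * τ + (Dw ω) (p + p.comp (X - C ω)) * σ) * f) by ring,
      ← key, ← key]
  rw [show p * ((p.comp (X + C ω) * τ + (Dw ω) (p + p.comp (X - C ω)) * σ) * f)
        = τ * (p.comp (X + C ω) * (p * f)) + (Dw ω) (p + p.comp (X - C ω)) * σ * p * f by ring]
  rw [map_add, ← hs (p.comp (X + C ω) * (p * f)), ← map_neg, ← map_neg, ← map_add]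
  congr 1
  simp only [Dw, LinearMap.coe_mk, AddHom.coe_mk, mul_comp, add_comp, sub_comp, X_comp, C_comp]
  have h1 : (p.comp (X + C ω)).comp (X + C (-ω)) = p := by
    rw [comp_assoc]
    simp [sub_eq_add_neg]
  have h2 : p.comp (X + C (-ω)) = p.comp (X - C ω) := by
    simp [sub_eq_add_neg]
  have h3 : (C (-ω)⁻¹ : Polynomial ℂ) = -C ω⁻¹ := by
    rw [inv_neg, map_neg]
  have h4 : (p.comp (X - C ω)).comp (X + C ω) = p := by
    rw [comp_assoc]
    simp
  rw [h1, h2, h3, h4]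
  ring
end

section
/- Let {P_n} be the monic orthogonal polynomial sequence of a regular functional 𝒰 and fix m ≥ 0. Define η_{n,m,ω} = (n+1)(n+2)···(n+m) and the monic polynomials P_n^{[m,ω]}(x) = D_ω^m P_{n+m}(x)/η_{n,m,ω}. If {𝔢_n} is the dual basis of {P_n^{[m,ω]}} and {𝔭_n} the dual basis of {P_n}, then D_{-ω}^m 𝔢_n = (-1)^m η_{n,m,ω} 𝔭_{n+m} for all n ≥ 0. -/
/-! Since `DwF (-ω) 𝒰 = -(𝒰 ∘ D_ω)`, the functional `D_{-ω}^m 𝔢ₙ` is `(-1)^m 𝔢ₙ ∘ D_ω^m`, and it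
suffices to compare both sides on the basis `{P_k}`. `D_ω` strictly lowers degrees (the leading
coefficient cancels in `p(x+ω) - p(x)`), so `D_ω^m` kills `P_k` for `k < m`, while
`D_ω^m P_{j+m} = η_{j,m} P_j^{[m,ω]}`, on which `𝔢ₙ` takes the value `η_{j,m} δ_{nj}`. -/

open Polynomial Finset

/-- η_{n,m,ω} = (n+1)_m = (n+1)(n+2)⋯(n+m). -/
noncomputable def etaW (m n : ℕ) : ℂ := ∏ k ∈ Finset.range m, ((n : ℂ) + 1 + k)

lemma Polynomial.linearMap_ext_of_natDegree_eq {K M : Type*} [Field K] [AddCommGroup M]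
    [Module K M] {P : ℕ → K[X]} (hP : ∀ n, P n ≠ 0) (hdeg : ∀ n, (P n).natDegree = n)
    {f g : K[X] →ₗ[K] M} (h : ∀ n, f (P n) = g (P n)) : f = g := by
  let S : Sequence K := ⟨P, fun n => by rw [degree_eq_natDegree (hP n), hdeg]⟩
  exact LinearMap.ext_on_range
    (S.span fun n => isUnit_iff_ne_zero.mpr (leadingCoeff_ne_zero.mpr (hP n))) h

lemma etaW_ne_zero (m n : ℕ) : etaW m n ≠ 0 :=
  prod_ne_zero_iff.mpr fun k _ => by exact_mod_cast (show n + 1 + k ≠ 0 by omega)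

lemma degree_Dw_lt (ω : ℂ) {p : ℂ[X]} (hp : p ≠ 0) : (Dw ω p).degree < p.degree := by
  have hsub : (taylor ω p - p).degree < p.degree := by
    simpa only [degree_taylor] using degree_sub_lt_left (degree_taylor p ω)
      ((taylor_eq_zero ω p).not.mpr hp) (leadingCoeff_taylor ω p)
  calc (Dw ω p).degree = (C ω⁻¹ * (taylor ω p - p)).degree := rfl
    _ ≤ (taylor ω p - p).degree := by rw [C_mul']; exact degree_smul_le _ _
    _ < p.degree := hsub

lemma Dw_pow_apply_eq_zero (ω : ℂ) {m : ℕ} {p : ℂ[X]} (hp : p.degree < m) :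
    (Dw ω ^ m) p = 0 := by
  induction m generalizing p with
  | zero => simp_all
  | succ m ih =>
    rcases eq_or_ne p 0 with rfl | hp0
    · exact map_zero _
    rw [pow_succ, Module.End.mul_apply]
    exact ih ((degree_Dw_lt ω hp0).trans_le (Order.le_of_lt_succ hp))

lemma DwF_neg_iterate (ω : ℂ) (m : ℕ) (U : ℂ[X] →ₗ[ℂ] ℂ) :
    (DwF (-ω))^[m] U = ((-1 : ℂ) ^ m) • (U ∘ₗ (Dw ω ^ m)) := by
  induction m with
  | zero => ext; simp
  | succ m ih =>
    ext p
    rw [Function.iterate_succ_apply', ih, DwF, neg_neg]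
    simp [pow_succ]

theorem stmt11_general (ω : ℂ) (P : ℕ → Polynomial ℂ)
    (hmonic : ∀ n, (P n).Monic) (hdeg : ∀ n, (P n).natDegree = n)
    (m : ℕ)
    (𝔭 𝔢 : ℕ → Polynomial ℂ →ₗ[ℂ] ℂ)
    (hdualP : ∀ n k, 𝔭 n (P k) = if n = k then 1 else 0)
    (hdualE : ∀ n k, 𝔢 n (C (etaW m k)⁻¹ * ((Dw ω ^ m) (P (k + m)))) = if n = k then 1 else 0)
    (n : ℕ) :
    (DwF (-ω))^[m] (𝔢 n) = ((-1) ^ m * etaW m n) • 𝔭 (n + m) := by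
  have hE : ∀ k, 𝔢 n ((Dw ω ^ m) (P k)) = etaW m n * 𝔭 (n + m) (P k) := by
    intro k
    rcases lt_or_ge k m with hk | hk
    · have hPk : (P k).degree < m := by
        rw [degree_eq_natDegree (hmonic k).ne_zero, hdeg]
        exact_mod_cast hk
      rw [Dw_pow_apply_eq_zero ω hPk, map_zero, hdualP, if_neg (by omega), mul_zero]
    · obtain ⟨j, rfl⟩ : ∃ j, k = j + m := ⟨k - m, by omega⟩
      have hscale : (Dw ω ^ m) (P (j + m)) =
          etaW m j • (C (etaW m j)⁻¹ * (Dw ω ^ m) (P (j + m))) := by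
        rw [smul_eq_C_mul, ← mul_assoc, ← C_mul, mul_inv_cancel₀ (etaW_ne_zero m j), C_1, one_mul]
      rw [hscale, map_smul, hdualE, hdualP, smul_eq_mul]
      by_cases hnj : n = j <;> simp [hnj]
  refine linearMap_ext_of_natDegree_eq (fun k => (hmonic k).ne_zero) hdeg fun k => ?_
  rw [DwF_neg_iterate, LinearMap.smul_apply, LinearMap.comp_apply, hE]
  simp only [LinearMap.smul_apply, smul_eq_mul]
  ring

/-- for the monic OPS {Pₙ} of a regular functional 𝒰 and the monic
polynomials Pₙ^{[m,ω]} = D_ω^m P_{n+m} / η_{n,m,ω}, the dual bases satisfy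
D_{-ω}^m 𝔢ₙ = (-1)^m η_{n,m,ω} 𝔭_{n+m}. -/
theorem stmt11 (ω : ℂ) (hω : ω ≠ 0) (U : Polynomial ℂ →ₗ[ℂ] ℂ) (P : ℕ → Polynomial ℂ)
    (hmonic : ∀ n, (P n).Monic) (hdeg : ∀ n, (P n).natDegree = n)
    (horth : ∀ n k, n ≠ k → U (P n * P k) = 0) (hreg : ∀ n, U (P n * P n) ≠ 0)
    (m : ℕ)
    (𝔭 𝔢 : ℕ → Polynomial ℂ →ₗ[ℂ] ℂ)
    (hdualP : ∀ n k, 𝔭 n (P k) = if n = k then 1 else 0)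
    (hdualE : ∀ n k, 𝔢 n (C (etaW m k)⁻¹ * ((Dw ω ^ m) (P (k + m)))) = if n = k then 1 else 0)
    (n : ℕ) :
    (DwF (-ω))^[m] (𝔢 n) = ((-1) ^ m * etaW m n) • 𝔭 (n + m) :=
  stmt11_general ω P hmonic hdeg m 𝔭 𝔢 hdualP hdualE n
end
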